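/- Let H = (V, μ, α, η, Δ, β, ε) be a Hom-bialgebra. Then Hom(V,V) with the convolution product f⋆g = μ∘(f⊗g)∘Δ and twisting map γ(f) = α∘f∘β is a Hom-associative algebra: γ(f)⋆(g⋆h) = (f⋆g)⋆γ(h) for all f,g,h ∈ Hom(V,V); moreover η∘ε is a unit for ⋆. -/

import Mathlib

open TensorProduct

noncomputable section

/-- A Hom-bialgebra `(V, μ, α, η, Δ, β, ε)`: `(V,μ,α,η)` is a unital Hom-associative
algebra, `(V,Δ,β,ε)` is a counital Hom-coassociative coalgebra, and `Δ`, `ε` are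
morphisms of algebras. -/
structure HomBialgebra (K V : Type*) [Field K] [AddCommGroup V] [Module K V] where
  /-- the multiplication `μ : V⊗V → V` -/
  mul : V ⊗[K] V →ₗ[K] V
  /-- the algebra twisting map `α` -/
  alpha : V →ₗ[K] V
  /-- the unit `η : K → V` -/
  unit : K →ₗ[K] V
  /-- the comultiplication `Δ : V → V⊗V` -/
  comul : V →ₗ[K] V ⊗[K] V
  /-- the coalgebra twisting map `β` -/
  beta : V →ₗ[K] V
  /-- the counit `ε : V → K` -/
  counit : V →ₗ[K] K
  /-- Hom-associativity: `μ∘(μ⊗α) = μ∘(α⊗μ)` (up to the associator) -/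
  hom_assoc : mul ∘ₗ TensorProduct.map mul alpha =
    mul ∘ₗ TensorProduct.map alpha mul ∘ₗ (TensorProduct.assoc K V V V).toLinearMap
  /-- `η(1)` is a left unit -/
  one_mul : ∀ x : V, mul (unit 1 ⊗ₜ[K] x) = x
  /-- `η(1)` is a right unit -/
  mul_one : ∀ x : V, mul (x ⊗ₜ[K] unit 1) = x
  /-- Hom-coassociativity: `(β⊗Δ)∘Δ = (Δ⊗β)∘Δ` (up to the associator) -/
  hom_coassoc : TensorProduct.map beta comul ∘ₗ comul =
    (TensorProduct.assoc K V V V).toLinearMap ∘ₗ TensorProduct.map comul beta ∘ₗ comul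
  /-- counit axiom `(ε⊗id)∘Δ = id` -/
  counit_comul : ∀ x : V,
    TensorProduct.lid K V (TensorProduct.map counit LinearMap.id (comul x)) = x
  /-- counit axiom `(id⊗ε)∘Δ = id` -/
  comul_counit : ∀ x : V,
    TensorProduct.rid K V (TensorProduct.map LinearMap.id counit (comul x)) = x
  /-- `Δ(η(1)) = η(1)⊗η(1)` -/
  comul_unit : comul (unit 1) = unit 1 ⊗ₜ[K] unit 1
  /-- `Δ` is multiplicative: `Δ(x·y) = Δ(x)•Δ(y)` (componentwise product on `V⊗V`) -/
  comul_mul : comul ∘ₗ mul =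
    TensorProduct.map mul mul ∘ₗ (TensorProduct.tensorTensorTensorComm K V V V V).toLinearMap
      ∘ₗ TensorProduct.map comul comul
  /-- `ε(η(1)) = 1` -/
  counit_unit : counit (unit 1) = 1
  /-- `ε` is multiplicative -/
  counit_mul : ∀ x y : V, counit (mul (x ⊗ₜ[K] y)) = counit x * counit y

variable {K V : Type*} [Field K] [AddCommGroup V] [Module K V]

/-- The convolution product `f ⋆ g = μ ∘ (f⊗g) ∘ Δ` on `Hom(V,V)`. -/
def HomBialgebra.conv (H : HomBialgebra K V) (f g : V →ₗ[K] V) : V →ₗ[K] V :=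
  H.mul ∘ₗ TensorProduct.map f g ∘ₗ H.comul

namespace HomBialgebra

variable (H : HomBialgebra K V)

theorem unit_apply (c : K) : H.unit c = c • H.unit 1 := by
  rw [← map_smul, smul_eq_mul, _root_.mul_one]

theorem mul_unit_tmul (c : K) (x : V) : H.mul (H.unit c ⊗ₜ x) = c • x := by
  rw [unit_apply, ← smul_tmul', map_smul, H.one_mul]

theorem mul_tmul_unit (x : V) (c : K) : H.mul (x ⊗ₜ H.unit c) = c • x := by
  rw [unit_apply, tmul_smul, map_smul, H.mul_one]

theorem lid_comp_map_counit_id_comp_comul :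
    (TensorProduct.lid K V).toLinearMap ∘ₗ map H.counit LinearMap.id ∘ₗ H.comul =
      LinearMap.id :=
  LinearMap.ext H.counit_comul

theorem rid_comp_map_id_counit_comp_comul :
    (TensorProduct.rid K V).toLinearMap ∘ₗ map LinearMap.id H.counit ∘ₗ H.comul =
      LinearMap.id :=
  LinearMap.ext H.comul_counit

theorem mul_comp_map_unit_comp_counit_left (f : V →ₗ[K] V) :
    H.mul ∘ₗ map (H.unit ∘ₗ H.counit) f =
      f ∘ₗ (TensorProduct.lid K V).toLinearMap ∘ₗ map H.counit LinearMap.id := by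
  ext x y
  simp [mul_unit_tmul]

theorem mul_comp_map_unit_comp_counit_right (f : V →ₗ[K] V) :
    H.mul ∘ₗ map f (H.unit ∘ₗ H.counit) =
      f ∘ₗ (TensorProduct.rid K V).toLinearMap ∘ₗ map LinearMap.id H.counit := by
  ext x y
  simp [mul_tmul_unit]

theorem unit_comp_counit_conv (f : V →ₗ[K] V) : H.conv (H.unit ∘ₗ H.counit) f = f := by
  rw [conv, ← LinearMap.comp_assoc, mul_comp_map_unit_comp_counit_left, LinearMap.comp_assoc,
    LinearMap.comp_assoc, lid_comp_map_counit_id_comp_comul, LinearMap.comp_id]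

theorem conv_unit_comp_counit (f : V →ₗ[K] V) : H.conv f (H.unit ∘ₗ H.counit) = f := by
  rw [conv, ← LinearMap.comp_assoc, mul_comp_map_unit_comp_counit_right, LinearMap.comp_assoc,
    LinearMap.comp_assoc, rid_comp_map_id_counit_comp_comul, LinearMap.comp_id]

theorem conv_homAssoc (f g h : V →ₗ[K] V) :
    H.conv (H.alpha ∘ₗ f ∘ₗ H.beta) (H.conv g h) =
      H.conv (H.conv f g) (H.alpha ∘ₗ h ∘ₗ H.beta) := by
  calc H.conv (H.alpha ∘ₗ f ∘ₗ H.beta) (H.conv g h)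
      = H.mul ∘ₗ map H.alpha H.mul ∘ₗ map f (map g h) ∘ₗ (map H.beta H.comul ∘ₗ H.comul) := by
        simp only [conv, map_comp, LinearMap.comp_assoc]
    _ = (H.mul ∘ₗ map H.alpha H.mul ∘ₗ (TensorProduct.assoc K V V V).toLinearMap) ∘ₗ
          map (map f g) h ∘ₗ map H.comul H.beta ∘ₗ H.comul := by
        rw [hom_coassoc, ← LinearMap.comp_assoc _ _ (map f (map g h)), map_map_comp_assoc_eq]
        simp only [LinearMap.comp_assoc]
    _ = H.conv (H.conv f g) (H.alpha ∘ₗ h ∘ₗ H.beta) := by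
        rw [← hom_assoc]
        simp only [conv, map_comp, LinearMap.comp_assoc]

end HomBialgebra

/-- for a Hom-bialgebra `H`, `Hom(V,V)` with the convolution product
`f⋆g = μ∘(f⊗g)∘Δ` and twisting `γ(f) = α∘f∘β` is a Hom-associative algebra:
`γ(f)⋆(g⋆h) = (f⋆g)⋆γ(h)`, and `η∘ε` is a (two-sided) unit for `⋆`. -/
theorem convolution_homAssociative (H : HomBialgebra K V) :
    (∀ f g h : V →ₗ[K] V,
        H.conv (H.alpha ∘ₗ f ∘ₗ H.beta) (H.conv g h) =
          H.conv (H.conv f g) (H.alpha ∘ₗ h ∘ₗ H.beta))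
    ∧ (∀ f : V →ₗ[K] V, H.conv (H.unit ∘ₗ H.counit) f = f)
    ∧ (∀ f : V →ₗ[K] V, H.conv f (H.unit ∘ₗ H.counit) = f) :=
  ⟨H.conv_homAssoc, H.unit_comp_counit_conv, H.conv_unit_comp_counit⟩
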